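/- Fix a real Δ > 5, an integer 0 ≤ i ≤ k−1, and vertices x, y ∈ V with d_G(x, y) ≥ (3Δ)^i · W(x, y). Then at least one of the following holds: (1) d_H(x, y) ≤ (1 + 8i/(Δ−5)) · d_G(x, y); or (2) A_{i+1} ≠ ∅ and d_H(x, p_{i+1}(x)) ≤ (2Δ/(Δ−5)) · d_G(x, y). -/

import Mathlib

open scoped ENNReal Classical

namespace ASP

variable {V : Type*}

noncomputable def wWeight {G : SimpleGraph V} (w : V → V → ℝ≥0∞) {x y : V}
    (p : G.Walk x y) : ℝ≥0∞ :=
  (p.darts.map fun d => w d.toProd.1 d.toProd.2).sum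

noncomputable def gdist (G : SimpleGraph V) (w : V → V → ℝ≥0∞) (x y : V) : ℝ≥0∞ :=
  ⨅ p : G.Walk x y, wWeight w p

noncomputable def maxW {G : SimpleGraph V} (w : V → V → ℝ≥0∞) {x y : V}
    (p : G.Walk x y) : ℝ≥0∞ :=
  (p.darts.map fun d => w d.toProd.1 d.toProd.2).foldr max 0

/-- The half-bunch of a vertex `u` of level `i`: all vertices of `A i` closer to `u` than half
the distance from `u` to `A (i+1)` (vacuously all of `A i` if `A (i+1) = ∅`), together with the
pivots of all nonempty higher levels. -/
def halfBunch (G : SimpleGraph V) (w : V → V → ℝ≥0∞) (A : ℕ → Set V) (pv : ℕ → V → V)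
    (k i : ℕ) (u : V) : Set V :=
  {v | v ∈ A i ∧ ∀ a ∈ A (i + 1), gdist G w u v < gdist G w u a / 2} ∪
    {v | ∃ j, i < j ∧ j < k ∧ (A j).Nonempty ∧ v = pv j u}

/-- The spanner `H`: the subgraph of `G` which is the union of the fixed shortest paths `P u v`
over all `u ∈ A i \ A (i+1)` and `v` in the half-bunch of `u`. -/
def spanGraph (G : SimpleGraph V) (w : V → V → ℝ≥0∞) (A : ℕ → Set V) (pv : ℕ → V → V)
    (k : ℕ) (P : ∀ u v : V, G.Walk u v) : SimpleGraph V where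
  Adj a b := ∃ u v i, u ∈ A i ∧ u ∉ A (i + 1) ∧ v ∈ halfBunch G w A pv k i u ∧
      s(a, b) ∈ (P u v).edges
  symm := by
    constructor
    rintro a b ⟨u, v, i, h1, h2, h3, he⟩
    exact ⟨u, v, i, h1, h2, h3, by rwa [Sym2.eq_swap] at he⟩
  loopless := by
    constructor
    rintro a ⟨u, v, i, _, _, _, he⟩
    exact G.loopless.irrefl a ((P u v).adj_of_mem_edges he)

/-!
Induction on `i`. For `i = 0`, either `y` lies in the half-bunch of `x`, or `A 1` has a point
within `2 d(x, y)` of `x`, and then the pivot `p₁(x)` is that close in `H`.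

For the step, put `L = (3Δ)^i W(x, y)` and cut a shortest `x`–`y` path greedily into pieces of
weight between `L` and `3L`; every piece is long compared to its heaviest edge, so the claim at
level `i` applies to it in both directions. If every piece satisfies the stretch bound, so does
the path. Otherwise let `b` start the first bad piece and `c` end the last one: the prefix up to
`b` and the suffix from `c` are good, and `b, c` have pivots `u, v ∈ A (i+1)` within
`M = 6ΔL/(Δ-5)` in `H`. Either `v` lies in the half-bunch of `u`, and the route `x b u v c y`
costs at most `(1 + 8i/(Δ-5)) d(x, y) + 4M`, or `A (i+2)` has a point within
`2 d(u, v) ≤ 2 (d(b, c) + 2M)` of `u`, which bounds `d(x, p_{i+2}(x))` by `2 d(x, y) + 5M`.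
Since `3ΔL ≤ d(x, y)`, both errors fit the claimed bounds.
-/

open SimpleGraph

section Walks

variable {G : SimpleGraph V} (w : V → V → ℝ≥0∞)

@[simp] lemma wWeight_nil {x : V} : wWeight w (Walk.nil : G.Walk x x) = 0 := rfl

@[simp] lemma wWeight_cons {x y z : V} (h : G.Adj x y) (p : G.Walk y z) :
    wWeight w (Walk.cons h p) = w x y + wWeight w p := by
  simp [wWeight]

lemma wWeight_append {x y z : V} (p : G.Walk x y) (q : G.Walk y z) :
    wWeight w (p.append q) = wWeight w p + wWeight w q := by
  simp [wWeight, Walk.darts_append]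

lemma wWeight_reverse (hw : ∀ u v, G.Adj u v → w u v = w v u) {x y : V} (p : G.Walk x y) :
    wWeight w p.reverse = wWeight w p := by
  induction p with
  | nil => rfl
  | cons h p ih =>
    rw [Walk.reverse_cons, wWeight_append, ih, wWeight_cons, wWeight_cons, wWeight_nil, add_zero,
      hw _ _ h.symm, add_comm]

@[simp] lemma maxW_nil {x : V} : maxW w (Walk.nil : G.Walk x x) = 0 := rfl

@[simp] lemma maxW_cons {x y z : V} (h : G.Adj x y) (p : G.Walk y z) :
    maxW w (Walk.cons h p) = max (w x y) (maxW w p) := by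
  simp [maxW]

lemma maxW_append {x y z : V} (p : G.Walk x y) (q : G.Walk y z) :
    maxW w (p.append q) = max (maxW w p) (maxW w q) := by
  induction p with
  | nil => simp
  | cons h p ih => simp [ih, max_assoc]

lemma maxW_reverse (hw : ∀ u v, G.Adj u v → w u v = w v u) {x y : V} (p : G.Walk x y) :
    maxW w p.reverse = maxW w p := by
  induction p with
  | nil => rfl
  | cons h p ih =>
    rw [Walk.reverse_cons, maxW_append, ih, maxW_cons, maxW_cons, maxW_nil,
      max_eq_left zero_le, hw _ _ h.symm, max_comm]

lemma gdist_le_wWeight {x y : V} (p : G.Walk x y) : gdist G w x y ≤ wWeight w p := iInf_le _ p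

@[simp] lemma gdist_self (x : V) : gdist G w x x = 0 :=
  nonpos_iff_eq_zero.1 (gdist_le_wWeight w Walk.nil)

lemma gdist_triangle (x y z : V) : gdist G w x z ≤ gdist G w x y + gdist G w y z := by
  simp only [gdist, ENNReal.iInf_add, ENNReal.add_iInf]
  exact le_iInf₂ fun q p => (gdist_le_wWeight w (p.append q)).trans_eq (wWeight_append w p q)

lemma gdist_comm (hw : ∀ u v, G.Adj u v → w u v = w v u) (x y : V) :
    gdist G w x y = gdist G w y x := by
  have key (a b : V) : gdist G w a b ≤ gdist G w b a :=
    le_iInf fun p => (gdist_le_wWeight w p.reverse).trans_eq (wWeight_reverse w hw p)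
  exact le_antisymm (key x y) (key y x)

lemma gdist_le_gdist_of_le {H : SimpleGraph V} (hle : H ≤ G) (x y : V) :
    gdist G w x y ≤ gdist H w x y := by
  refine le_iInf fun p => (gdist_le_wWeight w (p.mapLe hle)).trans_eq ?_
  simp only [wWeight, Walk.mapLe, Walk.darts_map, List.map_map]
  rfl

lemma gdist_le_wWeight_of_edges_subset {H : SimpleGraph V} {x y : V} (p : G.Walk x y)
    (hp : ∀ e ∈ p.edges, e ∈ H.edgeSet) : gdist H w x y ≤ wWeight w p := by
  refine (gdist_le_wWeight w (p.transfer H hp)).trans_eq ?_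
  induction p with
  | nil => rfl
  | cons h p ih => rw [Walk.transfer, wWeight_cons]; exact congrArg (w _ _ + ·) (ih _)

lemma wWeight_eq_gdist_of_append {x y z : V} {p : G.Walk x y} {q : G.Walk y z}
    (h : wWeight w (p.append q) = gdist G w x z) (hfin : gdist G w x z ≠ ⊤) :
    wWeight w p = gdist G w x y ∧ wWeight w q = gdist G w y z := by
  rw [wWeight_append] at h
  have hp := gdist_le_wWeight w p
  have hq := gdist_le_wWeight w q
  have hsum : wWeight w p + wWeight w q ≤ gdist G w x y + gdist G w y z :=
    h ▸ gdist_triangle w x y z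
  obtain ⟨hpfin, hqfin⟩ := ENNReal.add_ne_top.1 (h ▸ hfin)
  exact ⟨le_antisymm (ENNReal.le_of_add_le_add_right hqfin (hsum.trans (by gcongr))) hp,
    le_antisymm (ENNReal.le_of_add_le_add_left hpfin (hsum.trans (by gcongr))) hq⟩

lemma gdist_le_mul_of_append {H : SimpleGraph V} (C : ℝ≥0∞) {a b c : V} (p : G.Walk a b)
    (p' : G.Walk b c) (h : wWeight w (p.append p') = gdist G w a c)
    (hab : gdist H w a b ≤ C * gdist G w a b) (hbc : gdist H w b c ≤ C * gdist G w b c) :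
    gdist H w a c ≤ C * gdist G w a c :=
  calc gdist H w a c ≤ C * gdist G w a b + C * gdist G w b c :=
        (gdist_triangle w a b c).trans (add_le_add hab hbc)
    _ ≤ C * gdist G w a c := by
        rw [← mul_add, ← h, wWeight_append]
        gcongr <;> exact gdist_le_wWeight w _

lemma exists_eq_append_of_lt_wWeight {L W : ℝ≥0∞} {x y : V} (q : G.Walk x y)
    (hL : L < wWeight w q) (hW : maxW w q ≤ W) :
    ∃ (z : V) (p : G.Walk x z) (q' : G.Walk z y), q = p.append q' ∧
      L ≤ wWeight w p ∧ wWeight w p ≤ L + W ∧ 0 < p.length := by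
  induction q generalizing L with
  | nil => simp at hL
  | @cons a b c h q ih =>
    rw [maxW_cons, max_le_iff] at hW
    by_cases hLab : L ≤ w a b
    · exact ⟨b, .cons h .nil, q, rfl, by simpa using hLab, by simpa using le_add_left hW.1,
        by simp⟩
    rw [not_le] at hLab
    have hsub : L - w a b < wWeight w q := by
      rw [wWeight_cons] at hL
      exact ENNReal.sub_lt_of_lt_add hLab.le (by rwa [add_comm])
    obtain ⟨z, p, q', rfl, h₁, h₂, -⟩ := ih hsub hW.2
    have hcancel : w a b + (L - w a b) = L := add_tsub_cancel_of_le hLab.le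
    refine ⟨z, .cons h p, q', rfl, ?_, ?_, by simp⟩
    · rw [wWeight_cons, ← hcancel]; gcongr
    · rw [wWeight_cons, ← hcancel, add_assoc]; gcongr

lemma exists_eq_append_of_three_mul_lt {L W : ℝ≥0∞} (hWL : W ≤ L) {x y : V} (q : G.Walk x y)
    (hq : wWeight w q = gdist G w x y) (hfin : gdist G w x y ≠ ⊤) (hmax : maxW w q ≤ W)
    (hlong : 3 * L < gdist G w x y) :
    ∃ (z : V) (p : G.Walk x z) (q' : G.Walk z y), q = p.append q' ∧ 0 < p.length ∧
      wWeight w p = gdist G w x z ∧ wWeight w q' = gdist G w z y ∧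
      L ≤ gdist G w x z ∧ gdist G w x z ≤ 3 * L ∧ L ≤ gdist G w z y := by
  have hLq : L < wWeight w q :=
    lt_of_le_of_lt (le_mul_of_one_le_left' (by norm_num)) (hq ▸ hlong)
  obtain ⟨z, p, q', rfl, hLp, hpL, hpos⟩ := exists_eq_append_of_lt_wWeight w q hLq hmax
  obtain ⟨hp, hq'⟩ := wWeight_eq_gdist_of_append w hq hfin
  have hp2 : gdist G w x z ≤ 2 * L := by
    rw [← hp, two_mul]
    exact hpL.trans (by gcongr)
  refine ⟨z, p, q', rfl, hpos, hp, hq', hp ▸ hLp, hp2.trans (by gcongr; norm_num), ?_⟩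
  by_contra! h
  refine hlong.not_ge ?_
  calc gdist G w x y = gdist G w x z + gdist G w z y := by
        rw [← hp, ← hq', ← wWeight_append, hq]
    _ ≤ 2 * L + L := add_le_add hp2 h.le
    _ = 3 * L := by ring

end Walks

section Pieces

variable {G : SimpleGraph V} {w : V → V → ℝ≥0∞} (Good : V → V → Prop) (Piv : V → Prop)
  {L W : ℝ≥0∞}

theorem good_or_exists_pivots (hrefl : ∀ z, Good z z)
    (htrans : ∀ {a b c : V} (p : G.Walk a b) (p' : G.Walk b c),
      wWeight w (p.append p') = gdist G w a c → Good a b → Good b c → Good a c)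
    (hpiece : ∀ {a b : V} (p : G.Walk a b), wWeight w p = gdist G w a b → maxW w p ≤ W →
      L ≤ gdist G w a b → gdist G w a b ≤ 3 * L → Good a b ∨ Piv a ∧ Piv b)
    (hWL : W ≤ L) {z y : V} (q : G.Walk z y) (hq : wWeight w q = gdist G w z y)
    (hfin : gdist G w z y ≠ ⊤) (hmax : maxW w q ≤ W) (hL : L ≤ gdist G w z y) :
    Good z y ∨ ∃ (b c : V) (q₁ : G.Walk z b) (q₂ : G.Walk b c) (q₃ : G.Walk c y),
      q = q₁.append (q₂.append q₃) ∧ Good z b ∧ Piv b ∧ Piv c ∧ Good c y := by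
  by_cases hsmall : gdist G w z y ≤ 3 * L
  · refine (hpiece q hq hmax hL hsmall).imp id fun ⟨hz, hy⟩ => ?_
    exact ⟨z, y, .nil, q, .nil, by simp, hrefl z, hz, hy, hrefl y⟩
  obtain ⟨z₁, r, q', rfl, hrpos, hr, hq', hLr, hr3, hL'⟩ :=
    exists_eq_append_of_three_mul_lt w hWL q hq hfin hmax (not_le.1 hsmall)
  rw [maxW_append, max_le_iff] at hmax
  have hfin' : gdist G w z₁ y ≠ ⊤ :=
    ne_top_of_le_ne_top hfin (by rw [← hq, ← hq', wWeight_append]; exact le_add_self)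
  rcases hpiece r hr hmax.1 hLr hr3 with hgood | ⟨hz, hz₁⟩ <;>
    rcases good_or_exists_pivots hrefl htrans hpiece hWL q' hq' hfin' hmax.2 hL' with
      hgood' | ⟨b, c, q₁, q₂, q₃, rfl, hb, hpb, hpc, hc⟩
  · exact .inl (htrans r q' hq hgood hgood')
  · have hrq₁ : wWeight w (r.append q₁) = gdist G w z b := by
      rw [Walk.append_assoc] at hq
      exact (wWeight_eq_gdist_of_append w hq hfin).1
    exact .inr ⟨b, c, r.append q₁, q₂, q₃, by simp [Walk.append_assoc],
      htrans r q₁ hrq₁ hgood hb, hpb, hpc, hc⟩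
  · exact .inr ⟨z, z₁, .nil, r, q', by simp, hrefl z, hz, hz₁, hgood'⟩
  · exact .inr ⟨z, c, .nil, r.append (q₁.append q₂), q₃, by simp [Walk.append_assoc],
      hrefl z, hz, hpc, hc⟩
termination_by q.length
decreasing_by all_goals subst_vars; rw [Walk.length_append]; omega

end Pieces

lemma ofReal_mul_pivotBound_le {Δ r : ℝ} (hΔ : 5 < Δ) (hr : 0 ≤ r) {L d : ℝ≥0∞}
    (hL : ENNReal.ofReal (3 * Δ) * L ≤ d) :
    ENNReal.ofReal r * (ENNReal.ofReal (2 * Δ / (Δ - 5)) * (3 * L)) ≤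
      ENNReal.ofReal (2 * r / (Δ - 5)) * d := by
  calc ENNReal.ofReal r * (ENNReal.ofReal (2 * Δ / (Δ - 5)) * (3 * L))
      = ENNReal.ofReal (r * (2 * Δ / (Δ - 5)) * 3) * L := by
        rw [ENNReal.ofReal_mul (by positivity), ENNReal.ofReal_mul hr, ENNReal.ofReal_ofNat]
        ring
    _ = ENNReal.ofReal (2 * r / (Δ - 5)) * (ENNReal.ofReal (3 * Δ) * L) := by
        rw [← mul_assoc, ← ENNReal.ofReal_mul (by positivity)]
        congr 2
        field_simp
    _ ≤ ENNReal.ofReal (2 * r / (Δ - 5)) * d := by gcongr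

lemma exists_mem_notMem_succ {A : ℕ → Set V} {x : V} (h0 : x ∈ A 0) {j : ℕ} (hj : x ∉ A j) :
    ∃ l < j, x ∈ A l ∧ x ∉ A (l + 1) := by
  induction j with
  | zero => exact absurd h0 hj
  | succ j ih =>
    by_cases hx : x ∈ A j
    · exact ⟨j, j.lt_succ_self, hx, hj⟩
    · obtain ⟨l, hl, hxl⟩ := ih hx
      exact ⟨l, hl.trans j.lt_succ_self, hxl⟩

structure IsPivotSpanner (G : SimpleGraph V) (w : V → V → ℝ≥0∞) (A : ℕ → Set V)
    (pv : ℕ → V → V) (k : ℕ) (P : ∀ u v : V, G.Walk u v) : Prop where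
  symm : ∀ u v, G.Adj u v → w u v = w v u
  zero : A 0 = Set.univ
  succ_subset : ∀ i, A (i + 1) ⊆ A i
  top : A k = ∅
  pivot : ∀ i, i < k → ∀ v : V, (A i).Nonempty →
    pv i v ∈ A i ∧ ∀ a ∈ A i, gdist G w v (pv i v) ≤ gdist G w v a
  shortest : ∀ u v i, u ∈ A i → u ∉ A (i + 1) → v ∈ halfBunch G w A pv k i u →
    wWeight w (P u v) = gdist G w u v

section Spanner

variable {G : SimpleGraph V} {w : V → V → ℝ≥0∞} {A : ℕ → Set V} {pv : ℕ → V → V} {k : ℕ}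
  {P : ∀ u v : V, G.Walk u v} {Δ : ℝ}

local notation "dG" => gdist G w
local notation "dH" => gdist (spanGraph G w A pv k P) w

lemma spanGraph_le : spanGraph G w A pv k P ≤ G := by
  rintro a b ⟨u, v, i, -, -, -, he⟩
  exact (P u v).adj_of_mem_edges he

lemma gdist_le_gdist_spanGraph (x y : V) : dG x y ≤ dH x y :=
  gdist_le_gdist_of_le w spanGraph_le x y

lemma gdist_spanGraph_comm (hw : ∀ u v, G.Adj u v → w u v = w v u) (x y : V) :
    dH x y = dH y x :=
  gdist_comm w (fun u v h => hw u v (spanGraph_le h)) x y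

lemma gdist_spanGraph_le_of_mem_halfBunch
    (hP : ∀ u v i, u ∈ A i → u ∉ A (i + 1) → v ∈ halfBunch G w A pv k i u →
      wWeight w (P u v) = gdist G w u v)
    {u v : V} {i : ℕ} (hu : u ∈ A i) (hu' : u ∉ A (i + 1))
    (hv : v ∈ halfBunch G w A pv k i u) : dH u v ≤ dG u v := by
  refine (gdist_le_wWeight_of_edges_subset w (P u v) fun e he => ?_).trans_eq (hP u v i hu hu' hv)
  induction e with
  | _ a b => exact ⟨u, v, i, hu, hu', hv, he⟩

lemma gdist_spanGraph_le_or_exists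
    (hP : ∀ u v i, u ∈ A i → u ∉ A (i + 1) → v ∈ halfBunch G w A pv k i u →
      wWeight w (P u v) = gdist G w u v)
    {u v : V} {j : ℕ} (hu : u ∈ A j) (hv : v ∈ A j) :
    dH u v ≤ dG u v ∨ ∃ a ∈ A (j + 1), dG u a ≤ 2 * dG u v := by
  by_cases hu' : u ∈ A (j + 1)
  · exact .inr ⟨u, hu', by simp⟩
  by_cases hbunch : ∀ a ∈ A (j + 1), dG u v < dG u a / 2
  · exact .inl (gdist_spanGraph_le_of_mem_halfBunch hP hu hu' (.inl ⟨hv, hbunch⟩))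
  push Not at hbunch
  obtain ⟨a, ha, hle⟩ := hbunch
  refine .inr ⟨a, ha, ?_⟩
  rwa [ENNReal.div_le_iff two_ne_zero ENNReal.ofNat_ne_top, mul_comm] at hle

namespace IsPivotSpanner

variable (hS : IsPivotSpanner G w A pv k P)
include hS

lemma lt_of_nonempty {j : ℕ} (h : (A j).Nonempty) : j < k := by
  by_contra! hkj
  obtain ⟨x, hx⟩ := h
  simpa [hS.top] using antitone_nat_of_succ_le hS.succ_subset hkj hx

lemma gdist_spanGraph_pivot_le_of_notMem {x a : V} {j : ℕ} (hx : x ∉ A j) (ha : a ∈ A j) :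
    dH x (pv j x) ≤ dG x a := by
  have hjk := hS.lt_of_nonempty ⟨a, ha⟩
  obtain ⟨l, hlj, hxl, hxl'⟩ := exists_mem_notMem_succ (hS.zero ▸ Set.mem_univ x) hx
  exact (gdist_spanGraph_le_of_mem_halfBunch hS.shortest hxl hxl'
    (.inr ⟨j, hlj, hjk, ⟨a, ha⟩, rfl⟩)).trans ((hS.pivot j hjk x ⟨a, ha⟩).2 a ha)

lemma exists_mem_gdist_spanGraph_eq_zero {z a : V} {j : ℕ} (ha : a ∈ A j) (hza : dG z a = 0) :
    ∃ z' ∈ A j, dG z z' = 0 ∧ dH z z' = 0 := by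
  by_cases hz : z ∈ A j
  · exact ⟨z, hz, gdist_self w z, gdist_self _ z⟩
  have hH := hS.gdist_spanGraph_pivot_le_of_notMem hz ha
  rw [hza, nonpos_iff_eq_zero] at hH
  exact ⟨pv j z, (hS.pivot j (hS.lt_of_nonempty ⟨a, ha⟩) z ⟨a, ha⟩).1,
    nonpos_iff_eq_zero.1 ((gdist_le_gdist_spanGraph z _).trans_eq hH), hH⟩

/-- A pivot at distance zero need not be the vertex itself. Descending induction on `l` for
`u, v ∈ A l`: unless one lies in the half-bunch of the other, both reach points of `A (l + 1)`
at distance zero in `H`. -/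
lemma gdist_spanGraph_eq_zero {u v : V} (h : dG u v = 0) : dH u v = 0 := by
  suffices key : ∀ l ≤ k, ∀ u ∈ A l, ∀ v ∈ A l, dG u v = 0 → dH u v = 0 from
    key 0 (Nat.zero_le k) u (hS.zero ▸ Set.mem_univ u) v (hS.zero ▸ Set.mem_univ v) h
  intro l hl
  induction hl using Nat.decreasingInduction with
  | self => simp [hS.top]
  | of_succ l _ ih =>
    intro u hu v hv huv
    rcases gdist_spanGraph_le_or_exists hS.shortest hu hv with h | ⟨a, ha, hua⟩
    · exact nonpos_iff_eq_zero.1 (h.trans_eq huv)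
    have hvu : dG v u = 0 := by rw [gdist_comm w hS.symm, huv]
    rcases gdist_spanGraph_le_or_exists hS.shortest hv hu with h | ⟨b, hb, hvb⟩
    · rw [gdist_spanGraph_comm hS.symm]
      exact nonpos_iff_eq_zero.1 (h.trans_eq hvu)
    rw [huv, mul_zero, nonpos_iff_eq_zero] at hua
    rw [hvu, mul_zero, nonpos_iff_eq_zero] at hvb
    obtain ⟨u', hu', hGu, hHu⟩ := hS.exists_mem_gdist_spanGraph_eq_zero ha hua
    obtain ⟨v', hv', hGv, hHv⟩ := hS.exists_mem_gdist_spanGraph_eq_zero hb hvb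
    have hG' : dG u' v' = 0 := by
      refine nonpos_iff_eq_zero.1 ((gdist_triangle w u' u v').trans ?_)
      rw [gdist_comm w hS.symm u' u, hGu, zero_add]
      exact (gdist_triangle w u v v').trans (by rw [huv, hGv, add_zero])
    refine nonpos_iff_eq_zero.1 ((gdist_triangle _ u u' v).trans ?_)
    rw [hHu, zero_add]
    refine (gdist_triangle _ u' v' v).trans ?_
    rw [ih u' hu' v' hv' hG', gdist_spanGraph_comm hS.symm, hHv, add_zero]

lemma gdist_spanGraph_pivot_le {x a : V} {j : ℕ} (ha : a ∈ A j) : dH x (pv j x) ≤ dG x a := by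
  by_cases hx : x ∈ A j
  · have hx0 : dG x (pv j x) = 0 := by
      simpa using (hS.pivot j (hS.lt_of_nonempty ⟨x, hx⟩) x ⟨x, hx⟩).2 x hx
    rw [hS.gdist_spanGraph_eq_zero hx0]
    exact zero_le
  · exact hS.gdist_spanGraph_pivot_le_of_notMem hx ha

end IsPivotSpanner

def SpannerStretch (G : SimpleGraph V) (w : V → V → ℝ≥0∞) (A : ℕ → Set V) (pv : ℕ → V → V)
    (k : ℕ) (P : ∀ u v : V, G.Walk u v) (Δ : ℝ) (i : ℕ) : Prop :=
  ∀ x y (q : G.Walk x y), wWeight w q = gdist G w x y →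
    ENNReal.ofReal ((3 * Δ) ^ i) * maxW w q ≤ gdist G w x y →
    gdist (spanGraph G w A pv k P) w x y ≤
        ENNReal.ofReal (1 + 8 * i / (Δ - 5)) * gdist G w x y ∨
      (A (i + 1)).Nonempty ∧
        gdist (spanGraph G w A pv k P) w x (pv (i + 1) x) ≤
          ENNReal.ofReal (2 * Δ / (Δ - 5)) * gdist G w x y

lemma SpannerStretch.le_or_pivots {i : ℕ} (ih : SpannerStretch G w A pv k P Δ i)
    (hw : ∀ u v, G.Adj u v → w u v = w v u) {a b : V} (p : G.Walk a b)
    (hp : wWeight w p = dG a b) (hfar : ENNReal.ofReal ((3 * Δ) ^ i) * maxW w p ≤ dG a b) :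
    dH a b ≤ ENNReal.ofReal (1 + 8 * i / (Δ - 5)) * dG a b ∨
      (A (i + 1)).Nonempty ∧
        dH a (pv (i + 1) a) ≤ ENNReal.ofReal (2 * Δ / (Δ - 5)) * dG a b ∧
        dH b (pv (i + 1) b) ≤ ENNReal.ofReal (2 * Δ / (Δ - 5)) * dG a b := by
  rcases ih a b p hp hfar with h | ⟨hne, ha⟩
  · exact .inl h
  rcases ih b a p.reverse (by rw [wWeight_reverse w hw, hp, gdist_comm w hw])
      (by rwa [maxW_reverse w hw, gdist_comm w hw]) with h | ⟨-, hb⟩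
  · left
    rwa [gdist_spanGraph_comm hw, gdist_comm w hw]
  · exact .inr ⟨hne, ha, by rwa [gdist_comm w hw] at hb⟩

lemma gdist_spanGraph_le_of_detour (hw : ∀ u v, G.Adj u v → w u v = w v u) (hΔ : 5 < Δ)
    {i : ℕ} {x y b c u v : V} {L : ℝ≥0∞}
    (hL : ENNReal.ofReal (3 * Δ) * L ≤ dG x y) (hsum : dG x b + dG b c + dG c y ≤ dG x y)
    (hxb : dH x b ≤ ENNReal.ofReal (1 + 8 * i / (Δ - 5)) * dG x b)
    (hcy : dH c y ≤ ENNReal.ofReal (1 + 8 * i / (Δ - 5)) * dG c y)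
    (hbu : dH b u ≤ ENNReal.ofReal (2 * Δ / (Δ - 5)) * (3 * L))
    (hcv : dH c v ≤ ENNReal.ofReal (2 * Δ / (Δ - 5)) * (3 * L))
    (huv : dH u v ≤ ENNReal.ofReal (2 * Δ / (Δ - 5)) * (3 * L) + dG b c +
      ENNReal.ofReal (2 * Δ / (Δ - 5)) * (3 * L)) :
    dH x y ≤ ENNReal.ofReal (1 + 8 * ↑(i + 1) / (Δ - 5)) * dG x y := by
  set M := ENNReal.ofReal (2 * Δ / (Δ - 5)) * (3 * L)
  set C := ENNReal.ofReal (1 + 8 * i / (Δ - 5))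
  have hC : 1 ≤ C := ENNReal.one_le_ofReal.2 (le_add_of_nonneg_right (by positivity))
  calc dH x y ≤ dH x b + dH b u + dH u v + dH v c + dH c y := by
        refine (gdist_triangle _ x c y).trans (add_le_add_left ?_ _)
        refine (gdist_triangle _ x v c).trans (add_le_add_left ?_ _)
        refine (gdist_triangle _ x u v).trans (add_le_add_left ?_ _)
        exact gdist_triangle _ x b u
    _ ≤ C * dG x b + M + (M + C * dG b c + M) + M + C * dG c y := by
        rw [gdist_spanGraph_comm hw v c]
        gcongr
        exact huv.trans (by gcongr; exact le_mul_of_one_le_left' hC)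
    _ = C * (dG x b + dG b c + dG c y) + ENNReal.ofReal 4 * M := by
        rw [ENNReal.ofReal_ofNat]
        ring
    _ ≤ C * dG x y + ENNReal.ofReal (2 * 4 / (Δ - 5)) * dG x y :=
        add_le_add (by gcongr) (ofReal_mul_pivotBound_le hΔ (by norm_num) hL)
    _ = ENNReal.ofReal (1 + 8 * ↑(i + 1) / (Δ - 5)) * dG x y := by
        rw [← add_mul, ← ENNReal.ofReal_add (by positivity) (by positivity)]
        congr 2
        push_cast
        ring

lemma gdist_le_of_near_pivot (hΔ : 5 < Δ) {x y b c u a : V} {L : ℝ≥0∞}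
    (hL : ENNReal.ofReal (3 * Δ) * L ≤ dG x y) (hsum : dG x b + dG b c ≤ dG x y)
    (hbu : dG b u ≤ ENNReal.ofReal (2 * Δ / (Δ - 5)) * (3 * L))
    (hua : dG u a ≤ 2 * (ENNReal.ofReal (2 * Δ / (Δ - 5)) * (3 * L) + dG b c +
      ENNReal.ofReal (2 * Δ / (Δ - 5)) * (3 * L))) :
    dG x a ≤ ENNReal.ofReal (2 * Δ / (Δ - 5)) * dG x y := by
  set M := ENNReal.ofReal (2 * Δ / (Δ - 5)) * (3 * L)
  have hΔ5 : 0 < Δ - 5 := by linarith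
  calc dG x a ≤ dG x b + dG b u + dG u a :=
        (gdist_triangle w x u a).trans (by gcongr; exact gdist_triangle w x b u)
    _ ≤ dG x b + M + 2 * (M + dG b c + M) := by gcongr
    _ = (dG x b + 2 * dG b c) + ENNReal.ofReal 5 * M := by
        rw [ENNReal.ofReal_ofNat]
        ring
    _ ≤ 2 * dG x y + ENNReal.ofReal (2 * 5 / (Δ - 5)) * dG x y := by
        refine add_le_add ?_ (ofReal_mul_pivotBound_le hΔ (by norm_num) hL)
        calc dG x b + 2 * dG b c ≤ 2 * dG x b + 2 * dG b c := by
              gcongr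
              exact le_mul_of_one_le_left' one_le_two
          _ = 2 * (dG x b + dG b c) := (mul_add _ _ _).symm
          _ ≤ 2 * dG x y := by gcongr
    _ = ENNReal.ofReal (2 * Δ / (Δ - 5)) * dG x y := by
        rw [← ENNReal.ofReal_ofNat 2, ← add_mul,
          ← ENNReal.ofReal_add (by norm_num) (by positivity)]
        congr 2
        field_simp
        ring

namespace IsPivotSpanner

variable (hS : IsPivotSpanner G w A pv k P)
include hS

lemma spannerStretch_zero (hΔ : 5 < Δ) : SpannerStretch G w A pv k P Δ 0 := by
  intro x y _ _ _
  rcases gdist_spanGraph_le_or_exists hS.shortest (hS.zero ▸ Set.mem_univ x)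
    (hS.zero ▸ Set.mem_univ y) with h | ⟨a, ha, hxa⟩
  · left
    simpa using h
  · have h2 : (2 : ℝ≥0∞) ≤ ENNReal.ofReal (2 * Δ / (Δ - 5)) := by
      rw [← ENNReal.ofReal_ofNat 2]
      refine ENNReal.ofReal_le_ofReal ?_
      rw [le_div_iff₀ (by linarith)]
      linarith
    exact .inr ⟨⟨a, ha⟩, (hS.gdist_spanGraph_pivot_le ha).trans (hxa.trans (by gcongr))⟩

lemma stretch_of_pivots (hΔ : 5 < Δ) {i : ℕ} {x y b c : V} {L : ℝ≥0∞}
    (hL : ENNReal.ofReal (3 * Δ) * L ≤ dG x y) (hsum : dG x b + dG b c + dG c y ≤ dG x y)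
    (hne : (A (i + 1)).Nonempty)
    (hxb : dH x b ≤ ENNReal.ofReal (1 + 8 * i / (Δ - 5)) * dG x b)
    (hcy : dH c y ≤ ENNReal.ofReal (1 + 8 * i / (Δ - 5)) * dG c y)
    (hb : dH b (pv (i + 1) b) ≤ ENNReal.ofReal (2 * Δ / (Δ - 5)) * (3 * L))
    (hc : dH c (pv (i + 1) c) ≤ ENNReal.ofReal (2 * Δ / (Δ - 5)) * (3 * L)) :
    dH x y ≤ ENNReal.ofReal (1 + 8 * ↑(i + 1) / (Δ - 5)) * dG x y ∨
      (A (i + 1 + 1)).Nonempty ∧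
        dH x (pv (i + 1 + 1) x) ≤ ENNReal.ofReal (2 * Δ / (Δ - 5)) * dG x y := by
  set M := ENNReal.ofReal (2 * Δ / (Δ - 5)) * (3 * L)
  set u := pv (i + 1) b
  set v := pv (i + 1) c
  have hik := hS.lt_of_nonempty hne
  have hbu : dG b u ≤ M := (gdist_le_gdist_spanGraph b u).trans hb
  have huv : dG u v ≤ M + dG b c + M :=
    calc dG u v ≤ dG u b + dG b c + dG c v :=
          (gdist_triangle w u c v).trans (by gcongr; exact gdist_triangle w u b c)
      _ ≤ M + dG b c + M := by
          rw [gdist_comm w hS.symm u b]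
          gcongr
          exact (gdist_le_gdist_spanGraph c v).trans hc
  rcases gdist_spanGraph_le_or_exists hS.shortest (hS.pivot _ hik b hne).1
    (hS.pivot _ hik c hne).1 with h | ⟨a, ha, hua⟩
  · exact .inl (gdist_spanGraph_le_of_detour hS.symm hΔ hL hsum hxb hcy hb hc (h.trans huv))
  · exact .inr ⟨⟨a, ha⟩, (hS.gdist_spanGraph_pivot_le ha).trans
      (gdist_le_of_near_pivot hΔ hL (le_self_add.trans hsum) hbu (hua.trans (by gcongr)))⟩

lemma spannerStretch_succ (hΔ : 5 < Δ) {i : ℕ} (ih : SpannerStretch G w A pv k P Δ i) :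
    SpannerStretch G w A pv k P Δ (i + 1) := by
  intro x y q hq hfar
  set C := ENNReal.ofReal (1 + 8 * i / (Δ - 5))
  set L := ENNReal.ofReal ((3 * Δ) ^ i) * maxW w q
  by_cases hfin : dG x y = ⊤
  · left
    rw [hfin, ENNReal.mul_top (ENNReal.ofReal_pos.2 (by positivity)).ne']
    exact le_top
  have hL : ENNReal.ofReal (3 * Δ) * L ≤ dG x y := by
    rwa [← mul_assoc, ← ENNReal.ofReal_mul (by linarith), ← pow_succ']
  have hWL : maxW w q ≤ L :=
    le_mul_of_one_le_left' (ENNReal.one_le_ofReal.2 (one_le_pow₀ (by linarith)))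
  have hLd : L ≤ dG x y :=
    (le_mul_of_one_le_left' (ENNReal.one_le_ofReal.2 (by linarith))).trans hL
  have hpiece {a b : V} (p : G.Walk a b) (hp : wWeight w p = dG a b) (hmax : maxW w p ≤ maxW w q)
      (hLp : L ≤ dG a b) (hp3 : dG a b ≤ 3 * L) :
      dH a b ≤ C * dG a b ∨
        ((A (i + 1)).Nonempty ∧ dH a (pv (i + 1) a) ≤ ENNReal.ofReal (2 * Δ / (Δ - 5)) * (3 * L)) ∧
        ((A (i + 1)).Nonempty ∧ dH b (pv (i + 1) b) ≤ ENNReal.ofReal (2 * Δ / (Δ - 5)) * (3 * L)) :=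
    (ih.le_or_pivots hS.symm p hp ((mul_le_mul_right hmax _).trans hLp)).imp_right
      fun ⟨hne, ha, hb⟩ => ⟨⟨hne, ha.trans (by gcongr)⟩, ⟨hne, hb.trans (by gcongr)⟩⟩
  rcases good_or_exists_pivots (fun a b => dH a b ≤ C * dG a b)
      (fun z => (A (i + 1)).Nonempty ∧
        dH z (pv (i + 1) z) ≤ ENNReal.ofReal (2 * Δ / (Δ - 5)) * (3 * L))
      (fun z => by simp) (gdist_le_mul_of_append w C) hpiece hWL q hq hfin le_rfl hLd with
    h | ⟨b, c, q₁, q₂, q₃, rfl, hxb, ⟨hne, hb⟩, ⟨-, hc⟩, hcy⟩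
  · left
    refine h.trans (mul_le_mul_left (ENNReal.ofReal_le_ofReal ?_) _)
    gcongr
    exact i.le_succ
  · have hsum : dG x b + dG b c + dG c y ≤ dG x y := by
      rw [← hq, wWeight_append, wWeight_append, ← add_assoc]
      gcongr <;> exact gdist_le_wWeight w _
    exact hS.stretch_of_pivots hΔ hL hsum hne hxb hcy hb hc

theorem spannerStretch (hΔ : 5 < Δ) : ∀ i, SpannerStretch G w A pv k P Δ i
  | 0 => hS.spannerStretch_zero hΔ
  | i + 1 => hS.spannerStretch_succ hΔ (spannerStretch hΔ i)

end IsPivotSpanner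

end Spanner

theorem statement11_general (G : SimpleGraph V)
    (w : V → V → ℝ≥0∞) (hwsym : ∀ u v, G.Adj u v → w u v = w v u)
    (k : ℕ) (A : ℕ → Set V) (hA0 : A 0 = Set.univ)
    (hAnest : ∀ i, A (i + 1) ⊆ A i) (hAk : A k = ∅)
    (pv : ℕ → V → V)
    (hpv : ∀ i, i < k → ∀ v : V, (A i).Nonempty →
      pv i v ∈ A i ∧ ∀ a ∈ A i, gdist G w v (pv i v) ≤ gdist G w v a)
    (P : ∀ u v : V, G.Walk u v)
    (hP : ∀ u v i, u ∈ A i → u ∉ A (i + 1) → v ∈ halfBunch G w A pv k i u →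
      (P u v).IsPath ∧ wWeight w (P u v) = gdist G w u v)
    (Δ : ℝ) (hΔ : 5 < Δ) (i : ℕ) (x y : V) (Wxy : ℝ≥0∞)
    (hW : ∃ q : G.Walk x y, q.IsPath ∧ wWeight w q = gdist G w x y ∧ maxW w q = Wxy)
    (hfar : ENNReal.ofReal ((3 * Δ) ^ i) * Wxy ≤ gdist G w x y) :
    gdist (spanGraph G w A pv k P) w x y ≤
        ENNReal.ofReal (1 + 8 * i / (Δ - 5)) * gdist G w x y ∨
      ((A (i + 1)).Nonempty ∧
        gdist (spanGraph G w A pv k P) w x (pv (i + 1) x) ≤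
          ENNReal.ofReal (2 * Δ / (Δ - 5)) * gdist G w x y) := by
  obtain ⟨q, -, hq, rfl⟩ := hW
  have hS : IsPivotSpanner G w A pv k P :=
    ⟨hwsym, hA0, hAnest, hAk, hpv, fun u v i hu hu' hv => (hP u v i hu hu' hv).2⟩
  exact hS.spannerStretch hΔ i x y q hq hfar

/-- Lemma D.2: for `x, y` with `d_G(x,y) ≥ (3Δ)^i · W(x,y)` and `Δ > 5`, either
`d_H(x,y) ≤ (1 + 8i/(Δ-5)) d_G(x,y)`, or `A_{i+1} ≠ ∅` and
`d_H(x, p_{i+1}(x)) ≤ (2Δ/(Δ-5)) d_G(x,y)`. -/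
theorem statement11 [Fintype V] (G : SimpleGraph V) (hconn : G.Connected)
    (w : V → V → ℝ≥0∞) (hwsym : ∀ u v, G.Adj u v → w u v = w v u)
    (hwfin : ∀ u v, G.Adj u v → w u v ≠ ⊤)
    (k : ℕ) (hk : 1 ≤ k) (A : ℕ → Set V) (hA0 : A 0 = Set.univ)
    (hAnest : ∀ i, A (i + 1) ⊆ A i) (hAk : A k = ∅)
    (pv : ℕ → V → V)
    (hpv : ∀ i, i < k → ∀ v : V, (A i).Nonempty →
      pv i v ∈ A i ∧ ∀ a ∈ A i, gdist G w v (pv i v) ≤ gdist G w v a)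
    (P : ∀ u v : V, G.Walk u v)
    (hP : ∀ u v i, u ∈ A i → u ∉ A (i + 1) → v ∈ halfBunch G w A pv k i u →
      (P u v).IsPath ∧ wWeight w (P u v) = gdist G w u v)
    (Δ : ℝ) (hΔ : 5 < Δ) (i : ℕ) (hi : i < k) (x y : V) (Wxy : ℝ≥0∞)
    (hW : ∃ q : G.Walk x y, q.IsPath ∧ wWeight w q = gdist G w x y ∧ maxW w q = Wxy)
    (hfar : ENNReal.ofReal ((3 * Δ) ^ i) * Wxy ≤ gdist G w x y) :
    gdist (spanGraph G w A pv k P) w x y ≤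
        ENNReal.ofReal (1 + 8 * i / (Δ - 5)) * gdist G w x y ∨
      ((A (i + 1)).Nonempty ∧
        gdist (spanGraph G w A pv k P) w x (pv (i + 1) x) ≤
          ENNReal.ofReal (2 * Δ / (Δ - 5)) * gdist G w x y) :=
  statement11_general G w hwsym k A hA0 hAnest hAk pv hpv P hP Δ hΔ i x y Wxy hW hfar

end ASP
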